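/- arXiv:2509.19279 — 8 statements merged into one kernel-verified Lean document; each statement's English description precedes it below -/
import Mathlib

section
/- Consider weighted-approval control by adding voters with instance (C, V, W, w, p). Let C' = {c ∈ C \ {p} : score_V(c) ≥ score_V(p)}, for c ∈ C' let B_c = {v ∈ W : v approves p but not c} and Δ_c = score_V(c) − score_V(p), and let B = {v ∈ W : v approves p}. Then: a selection of voters x : B → {0,1} satisfies ∑_{v ∈ B_c} w(v)·x(v) ≥ Δ_c + 1 for every c ∈ C' if and only if p is the unique approval winner of (C, V ∪ W') where W' = {v ∈ B : x(v) = 1}. Moreover the objective value ∑_{v∈B} x(v) equals |W'|. -/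
/-!
Every added voter approves `p`, so adding `W'` raises `p`'s score by `w(W')` and the score of
`c` by `w(W')` minus the weight of the added voters that reject `c`. Hence `c` falls strictly
behind `p` exactly when that rejecting weight exceeds `score_V(c) - score_V(p)`, a condition
that is vacuous when `c` already trails `p` in `V`.
-/

open Finset

section ApprovalScore

variable {C ι : Type*} (app : ι → C → Bool) (w : ι → ℕ)

def approvalScore (A : Finset ι) (c : C) : ℕ :=
  ∑ v ∈ A.filter (fun v => app v c = true), w v

variable {app w}

lemma approvalScore_union [DecidableEq ι] {A B : Finset ι} (h : Disjoint A B) (c : C) :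
    approvalScore app w (A ∪ B) c = approvalScore app w A c + approvalScore app w B c := by
  rw [approvalScore, filter_union, sum_union (disjoint_filter_filter h)]
  rfl

lemma approvalScore_eq_add_of_forall_approves {A : Finset ι} {p : C}
    (hA : ∀ v ∈ A, app v p = true) (c : C) :
    approvalScore app w A p =
      approvalScore app w A c + ∑ v ∈ A.filter (fun v => app v c = false), w v := by
  rw [approvalScore, filter_true_of_mem hA, approvalScore]
  simpa using (sum_filter_add_sum_filter_not A (fun v => app v c = true) w).symm

end ApprovalScore

lemma covering_constraint_iff_lt {a b t g : ℕ} :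
    (a ≤ b → b - a + 1 ≤ g) ↔ b + t < a + (t + g) := by
  omega

theorem stmt4_general {C ι : Type*} [Fintype C] [DecidableEq C] [DecidableEq ι]
    (app : ι → C → Bool) (w : ι → ℕ)
    (V W : Finset ι) (hdisj : Disjoint V W) (p : C)
    (score : Finset ι → C → ℕ)
    (hscore : ∀ (A : Finset ι) (x : C),
      score A x = ∑ v ∈ A.filter (fun v => app v x = true), w v)
    (x : ι → Bool)
    (W' : Finset ι)
    (hW' : W' = (W.filter (fun v => app v p = true)).filter (fun v => x v = true)) :
    ((∀ c : C, c ≠ p → score V p ≤ score V c →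
        score V c - score V p + 1 ≤
          ∑ v ∈ (W.filter (fun v => app v p = true ∧ app v c = false)).filter
              (fun v => x v = true), w v)
      ↔ (∀ c : C, c ≠ p → score (V ∪ W') c < score (V ∪ W') p)) ∧
    (∑ v ∈ W.filter (fun v => app v p = true), (if x v then 1 else 0)) = W'.card := by
  obtain rfl : score = approvalScore app w := funext₂ hscore
  have hVW' : Disjoint V W' :=
    hdisj.mono_right (hW' ▸ (filter_subset _ _).trans (filter_subset _ _))
  have hW'p : ∀ v ∈ W', app v p = true := fun v hv => by
    rw [hW'] at hv
    exact (mem_filter.1 (mem_filter.1 hv).1).2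
  have hrejecting : ∀ c : C,
      (W.filter (fun v => app v p = true ∧ app v c = false)).filter (fun v => x v = true) =
        W'.filter (fun v => app v c = false) := fun c => by
    simp only [hW', filter_filter]
    exact filter_congr fun v _ => by tauto
  refine ⟨forall_congr' fun c => forall_congr' fun _ => ?_, ?_⟩
  · rw [approvalScore_union hVW', approvalScore_union hVW',
      approvalScore_eq_add_of_forall_approves hW'p c, hrejecting]
    exact covering_constraint_iff_lt
  · rw [hW', card_filter]

/-- CIP correctness for weighted-approval constructive control by adding voters:
a 0/1 selection `x` of unregistered voters approving `p` satisfies the covering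
constraints `∑_{v ∈ B_c} w(v)·x(v) ≥ Δ_c + 1` for every candidate `c ≠ p` with
`score_V(c) ≥ score_V(p)` if and only if `p` is the unique approval winner of
`(C, V ∪ W')` where `W' = {v ∈ B : x v = true}`; moreover the objective value
equals `|W'|`. -/
theorem stmt4 {C ι : Type*} [Fintype C] [DecidableEq C] [DecidableEq ι]
    (app : ι → C → Bool) (w : ι → ℕ) (hw : ∀ v, 0 < w v)
    (V W : Finset ι) (hdisj : Disjoint V W) (p : C)
    (score : Finset ι → C → ℕ)
    (hscore : ∀ (A : Finset ι) (x : C),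
      score A x = ∑ v ∈ A.filter (fun v => app v x = true), w v)
    (x : ι → Bool)
    (W' : Finset ι)
    (hW' : W' = (W.filter (fun v => app v p = true)).filter (fun v => x v = true)) :
    ((∀ c : C, c ≠ p → score V p ≤ score V c →
        score V c - score V p + 1 ≤
          ∑ v ∈ (W.filter (fun v => app v p = true ∧ app v c = false)).filter
              (fun v => x v = true), w v)
      ↔ (∀ c : C, c ≠ p → score (V ∪ W') c < score (V ∪ W') p)) ∧
    (∑ v ∈ W.filter (fun v => app v p = true), (if x v then 1 else 0)) = W'.card :=
  stmt4_general app w V W hdisj p score hscore x W' hW'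
end

section
/- Consider weighted-approval control by deleting voters with instance (C, V, w, p). Let C' = {c ∈ C \ {p} : score_V(c) ≥ score_V(p)}, for c ∈ C' let B_c = {v ∈ V : v approves c but not p}, Δ_c = score_V(c) − score_V(p), and B = {v ∈ V : v does not approve p}. Then a selection x : B → {0,1} satisfies ∑_{v ∈ B_c} w(v)·x(v) ≥ Δ_c + 1 for every c ∈ C' if and only if p is the unique approval winner of (C, V \ V') where V' = {v ∈ B : x(v) = 1}. -/
/-! Deleting a voter who disapproves `p` leaves `score p` unchanged and lowers `score c` by the
voter's weight exactly when the voter approves `c`. Hence after deleting `V'` the score of `c`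
drops by the covering sum `∑_{v ∈ B_c} w(v)·x(v)`, and `c` falls strictly below `p` exactly when
that sum exceeds `Δ_c`; for `c` already behind `p` there is nothing to cover. -/

open Finset

theorem Finset.sum_filter_sdiff_add_sum_filter {ι M : Type*} [DecidableEq ι] [AddCommMonoid M]
    {s t : Finset ι} (P : ι → Prop) [DecidablePred P] (f : ι → M) (h : s ⊆ t) :
    ∑ i ∈ (t \ s).filter P, f i + ∑ i ∈ s.filter P, f i = ∑ i ∈ t.filter P, f i := by
  simp only [sum_filter]
  exact sum_sdiff h

theorem filter_approves_filter_disapproves {C ι : Type*} (app : ι → C → Bool) (x : ι → Bool)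
    (V : Finset ι) (p c : C) :
    ((V.filter (fun v => app v p = false)).filter (fun v => x v = true)).filter
        (fun v => app v c = true) =
      (V.filter (fun v => app v c = true ∧ app v p = false)).filter (fun v => x v = true) := by
  ext v
  simp only [mem_filter]
  tauto

theorem stmt5_general {C ι : Type*} [DecidableEq ι]
    (app : ι → C → Bool) (w : ι → ℕ)
    (V : Finset ι) (p : C)
    (score : Finset ι → C → ℕ)
    (hscore : ∀ (A : Finset ι) (x : C),
      score A x = ∑ v ∈ A.filter (fun v => app v x = true), w v)
    (x : ι → Bool)
    (V' : Finset ι)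
    (hV' : V' = (V.filter (fun v => app v p = false)).filter (fun v => x v = true)) :
    (∀ c : C, c ≠ p → score V p ≤ score V c →
        score V c - score V p + 1 ≤
          ∑ v ∈ (V.filter (fun v => app v c = true ∧ app v p = false)).filter
              (fun v => x v = true), w v)
      ↔ (∀ c : C, c ≠ p → score (V \ V') c < score (V \ V') p) := by
  have hsub : V' ⊆ V := hV' ▸ (filter_subset _ _).trans (filter_subset _ _)
  have hdrop : ∀ c, score (V \ V') c + ∑ v ∈ (V.filter (fun v => app v c = true ∧
      app v p = false)).filter (fun v => x v = true), w v = score V c := fun c => by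
    rw [hscore, hscore, ← filter_approves_filter_disapproves, ← hV']
    exact sum_filter_sdiff_add_sum_filter _ w hsub
  have hp : score (V \ V') p = score V p := by simpa using hdrop p
  refine forall_congr' fun c => imp_congr_right fun _ => ?_
  have := hdrop c
  omega

/-- CIP correctness for weighted-approval constructive control by deleting voters:
a 0/1 selection `x` of voters disapproving `p` satisfies the covering constraints
`∑_{v ∈ B_c} w(v)·x(v) ≥ Δ_c + 1` for every candidate `c ≠ p` with
`score_V(c) ≥ score_V(p)` if and only if `p` is the unique approval winner of
`(C, V \ V')` where `V' = {v ∈ B : x v = true}`. -/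
theorem stmt5 {C ι : Type*} [Fintype C] [DecidableEq C] [DecidableEq ι]
    (app : ι → C → Bool) (w : ι → ℕ) (hw : ∀ v, 0 < w v)
    (V : Finset ι) (p : C)
    (score : Finset ι → C → ℕ)
    (hscore : ∀ (A : Finset ι) (x : C),
      score A x = ∑ v ∈ A.filter (fun v => app v x = true), w v)
    (x : ι → Bool)
    (V' : Finset ι)
    (hV' : V' = (V.filter (fun v => app v p = false)).filter (fun v => x v = true)) :
    (∀ c : C, c ≠ p → score V p ≤ score V c →
        score V c - score V p + 1 ≤
          ∑ v ∈ (V.filter (fun v => app v c = true ∧ app v p = false)).filter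
              (fun v => x v = true), w v)
      ↔ (∀ c : C, c ≠ p → score (V \ V') c < score (V \ V') p) :=
  stmt5_general app w V p score hscore x V' hV'
end

section
/- Reduction from Minimum Set Cover to approval constructive control by adding voters: given a set cover instance (U, S) with U = {x_1,…,x_n} and S = {S_1,…,S_m} covering U, construct the approval election with candidates C = U ∪ {p}, registered voters V = ∅, and for each i ∈ [m] one unregistered voter w_i approving exactly the candidates in C \ S_i. Then for every k, there exists a subfamily S' ⊆ S of size k with ⋃ S' = U if and only if there exists W' ⊆ {w_1,…,w_m} of size k such that p is the unique approval winner of (C, W'). -/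
open Finset

theorem Finset.card_filter_lt_card_iff {ι : Type*} (s : Finset ι) (p : ι → Prop)
    [DecidablePred p] : #(s.filter p) < #s ↔ ∃ i ∈ s, ¬p i := by
  refine ⟨fun h => ?_, fun h => card_lt_card (filter_ssubset.2 h)⟩
  obtain ⟨i, hi, hi_notMem⟩ := exists_mem_notMem_of_card_lt_card h
  exact ⟨i, hi, fun hp => hi_notMem (mem_filter.2 ⟨hi, hp⟩)⟩

theorem Finset.subset_biUnion_iff_card_filter_notMem_lt {ι α : Type*} [DecidableEq α]
    (S : ι → Finset α) (T : Finset ι) (U : Finset α) :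
    U ⊆ T.biUnion S ↔ ∀ u ∈ U, #(T.filter (fun i => u ∉ S i)) < #T := by
  simp only [subset_iff, mem_biUnion, card_filter_lt_card_iff, not_not]

theorem stmt6_general {α : Type*} [DecidableEq α] {m : ℕ}
    (U : Finset α)
    (S : Fin m → Finset α)
    (k : ℕ) :
    (∃ T : Finset (Fin m), T.card = k ∧ U ⊆ T.biUnion S) ↔
    (∃ W' : Finset (Fin m), W'.card = k ∧
      ∀ u ∈ U, (W'.filter (fun i => u ∉ S i)).card < W'.card) :=
  exists_congr fun T => and_congr_right' (subset_biUnion_iff_card_filter_notMem_lt S T U)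

/-- Reduction from Minimum Set Cover to approval constructive control by adding
voters. Candidates are `U ∪ {p}`; registered voters `V = ∅`; for each `i` one
unregistered voter `w_i` approving exactly `C \ S_i` (so `w_i` approves `p` and
disapproves exactly the members of `S_i`). For a set `W'` of added voters,
`p`'s approval score is `|W'|` and the score of `u ∈ U` is
`|{i ∈ W' : u ∉ S_i}|`; `p` is a unique winner iff every other candidate's score
is strictly smaller. Then for every `k` there is a subfamily of `S` of size `k`
covering `U` iff there is a set of `k` unregistered voters making `p` the unique
approval winner. -/
theorem stmt6 {α : Type*} [DecidableEq α] {m : ℕ}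
    (U : Finset α) (hU : U.Nonempty)
    (S : Fin m → Finset α) (hS : ∀ i, S i ⊆ U)
    (hcover : U ⊆ Finset.univ.biUnion S)
    (k : ℕ) :
    (∃ T : Finset (Fin m), T.card = k ∧ U ⊆ T.biUnion S) ↔
    (∃ W' : Finset (Fin m), W'.card = k ∧
      ∀ u ∈ U, (W'.filter (fun i => u ∉ S i)).card < W'.card) :=
  stmt6_general U S k
end

section
/- The OPT values coincide under the MSC-to-approval-CCAV reduction: with the construction mapping set cover instance (U, S) to the approval election (C = U ∪ {p}, V = ∅, W = {w_i : i ∈ [m]}, where w_i approves C \ S_i), the minimum size of a set cover of U from S equals the minimum size of a subset W' ⊆ W making p the unique approval winner of (C, W'). -/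
/-!
Every voter approves `p`, so `p` beats `u` exactly when some chosen voter disapproves `u`,
i.e. when some chosen set `S i` contains `u`. Hence the subsets of voters making `p` the
unique winner are precisely the set covers, and the two minima are taken over the same set.
-/

open Finset

theorem Finset.card_filter_not_lt_card_iff {ι : Type*} (s : Finset ι) (p : ι → Prop)
    [DecidablePred p] : #(s.filter fun i => ¬p i) < #s ↔ ∃ i ∈ s, p i := by
  rw [(card_filter_le _ _).lt_iff_ne, Ne, card_filter_eq_iff]
  simp

theorem unique_approval_winner_iff_subset_biUnion {α ι : Type*} [DecidableEq α]
    (U : Finset α) (S : ι → Finset α) (W : Finset ι) :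
    (∀ u ∈ U, #(W.filter fun i => u ∉ S i) < #W) ↔ U ⊆ W.biUnion S := by
  simp only [card_filter_not_lt_card_iff, subset_iff, mem_biUnion]

theorem stmt7_general {α : Type*} [DecidableEq α] {m : ℕ}
    (U : Finset α)
    (S : Fin m → Finset α) :
    sInf {k : ℕ | ∃ T : Finset (Fin m), T.card = k ∧ U ⊆ T.biUnion S} =
    sInf {k : ℕ | ∃ W' : Finset (Fin m), W'.card = k ∧
      ∀ u ∈ U, (W'.filter (fun i => u ∉ S i)).card < W'.card} := by
  simp only [unique_approval_winner_iff_subset_biUnion]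

/-- The OPT values coincide under the MSC-to-approval-CCAV reduction: with
candidates `U ∪ {p}`, `V = ∅`, and for each `i` one unregistered voter `w_i`
approving exactly `C \ S_i`, the minimum size of a set cover of `U` from `S`
equals the minimum size of a subset `W'` of the unregistered voters making `p`
the unique approval winner (where `p`'s score is `|W'|` and the score of
`u ∈ U` is `|{i ∈ W' : u ∉ S_i}|`). -/
theorem stmt7 {α : Type*} [DecidableEq α] {m : ℕ}
    (U : Finset α) (hU : U.Nonempty)
    (S : Fin m → Finset α) (hS : ∀ i, S i ⊆ U)
    (hcover : U ⊆ Finset.univ.biUnion S) :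
    sInf {k : ℕ | ∃ T : Finset (Fin m), T.card = k ∧ U ⊆ T.biUnion S} =
    sInf {k : ℕ | ∃ W' : Finset (Fin m), W'.card = k ∧
      ∀ u ∈ U, (W'.filter (fun i => u ∉ S i)).card < W'.card} :=
  stmt7_general U S
end

section
/- In an approval election in which every candidate has the same approval score, deleting voters who do not approve p leaves p's score unchanged, and for any set D of voters who do not approve p, p becomes the unique approval winner after deleting D if and only if every candidate c ≠ p is approved by at least one voter in D. -/
/-- Core claim for the MSC-to-approval-CCDV reduction: in an approval election
where every candidate has the same score as `p`, deleting a set `D` of voters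
none of whom approves `p` leaves `p`'s score unchanged, and `p` becomes the
unique approval winner of `(C, V \ D)` iff every candidate `c ≠ p` is approved
by at least one voter in `D`. -/
theorem stmt8 {C ι : Type*} [Fintype C] [DecidableEq ι]
    (app : ι → C → Bool) (V : Finset ι) (p : C)
    (score : Finset ι → C → ℕ)
    (hscore : ∀ (A : Finset ι) (x : C),
      score A x = (A.filter (fun v => app v x = true)).card)
    (heq : ∀ c : C, score V c = score V p)
    (D : Finset ι) (hDV : D ⊆ V) (hDp : ∀ v ∈ D, app v p = false) :
    score (V \ D) p = score V p ∧
    ((∀ c : C, c ≠ p → score (V \ D) c < score (V \ D) p) ↔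
      (∀ c : C, c ≠ p → ∃ v ∈ D, app v c = true)) := by
  have hfilt : ∀ x : C, (V \ D).filter (fun v => app v x = true)
      = V.filter (fun v => app v x = true) \ D.filter (fun v => app v x = true) := by
    intro x
    ext v
    simp only [Finset.mem_filter, Finset.mem_sdiff]
    tauto
  have hsub : ∀ x : C, D.filter (fun v => app v x = true) ⊆ V.filter (fun v => app v x = true) :=
    fun x => Finset.filter_subset_filter _ hDV
  have hcard : ∀ x : C, score (V \ D) x
      = score V x - (D.filter (fun v => app v x = true)).card := by
    intro x
    rw [hscore, hscore, hfilt, Finset.card_sdiff_of_subset (hsub x)]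
  have hp : score (V \ D) p = score V p := by
    rw [hcard]
    have : D.filter (fun v => app v p = true) = ∅ := by
      apply Finset.filter_false_of_mem
      intro v hv
      simp [hDp v hv]
    simp [this]
  refine ⟨hp, ?_⟩
  constructor
  · intro h c hc
    have := h c hc
    rw [hcard, hp, ← heq c] at this
    have hpos : 0 < (D.filter (fun v => app v c = true)).card := by omega
    obtain ⟨v, hv⟩ := Finset.card_pos.mp hpos
    exact ⟨v, (Finset.mem_filter.mp hv).1, (Finset.mem_filter.mp hv).2⟩
  · intro h c hc
    obtain ⟨v, hvD, hvc⟩ := h c hc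
    have hpos : 0 < (D.filter (fun v => app v c = true)).card :=
      Finset.card_pos.mpr ⟨v, Finset.mem_filter.mpr ⟨hvD, hvc⟩⟩
    have hle : (D.filter (fun v => app v c = true)).card ≤ score V c := by
      rw [hscore]; exact Finset.card_le_card (hsub c)
    rw [hcard, hp, ← heq c]
    omega
end

section
/- In the plurality election constructed from a Minimum k-Union instance (U, S, k) with k > 1 — candidates C = U ∪ B ∪ {p} where B = {b_1,…,b_{n+1}}; votes: for each i ∈ [m] one vote ranking the members of S_i first then p; (k−1+N) votes ranking b_1 first; and N votes ranking p first, where N is the maximum over u ∈ U of the number of sets containing u — if D ⊆ C \ {p} is any set of candidates whose deletion makes p the unique plurality winner and D ∩ B = ∅, then the family Ŝ = {S_i ∈ S : S_i ⊆ D} has size at least k. -/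
/-- Candidates for the MkU construction: `U = Fin n`, buffers `B = Fin (n+1)`,
and the distinguished candidate `p`. -/
abbrev MCand (n : ℕ) := Fin n ⊕ (Fin (n + 1) ⊕ Unit)

/-- The distinguished candidate `p`. -/
def mp {n : ℕ} : MCand n := Sum.inr (Sum.inr ())

/-- Buffer candidate `b_j`. -/
def mb {n : ℕ} (j : Fin (n + 1)) : MCand n := Sum.inr (Sum.inl j)

/-- Element candidate `u`. -/
def mu {n : ℕ} (u : Fin n) : MCand n := Sum.inl u

/-- `N` = the maximum over `u ∈ U` of the number of sets containing `u`. -/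
def NVal {n m : ℕ} (S : Fin m → Finset (Fin n)) : ℕ :=
  Finset.univ.sup (fun u : Fin n => (Finset.univ.filter (fun i => u ∈ S i)).card)

/-- A vote is a preference list (most preferred first); its top choice after
deleting the candidates in `D` is the first surviving entry. -/
def topAfter {C : Type*} [DecidableEq C] (D : Finset C) (l : List C) : Option C :=
  (l.filter (fun c => decide (c ∉ D))).head?

/-- Plurality score of candidate `c` after deleting `D`: the number of votes
whose top surviving candidate is `c`. -/
def plScore {C : Type*} [DecidableEq C] (votes : List (List C)) (D : Finset C)
    (c : C) : ℕ :=
  votes.countP (fun l => decide (topAfter D l = some c))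

/-- Type-1 vote for set `S_i`: members of `S_i`, then `p`, then the rest. -/
noncomputable def type1 {n m : ℕ} (S : Fin m → Finset (Fin n)) (i : Fin m) : List (MCand n) :=
  ((S i).toList.map mu) ++ [mp] ++
    (Finset.univ.toList.filter
      (fun c : MCand n => decide (c ∉ ((S i).image mu ∪ {mp}))))

/-- Type-2 vote: `b_1 > ⋯ > b_{n+1} > (members of U) > p`. -/
def type2 (n : ℕ) : List (MCand n) :=
  ((List.finRange (n + 1)).map mb) ++ ((List.finRange n).map mu) ++ [mp]

/-- Type-3 vote: `p` first, then the rest. -/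
noncomputable def type3 (n : ℕ) : List (MCand n) :=
  mp :: (Finset.univ.toList.filter (fun c : MCand n => decide (c ≠ mp)))

/-- The election's votes: one Type-1 vote per set, `k - 1 + N` Type-2 votes and
`N` Type-3 votes. -/
noncomputable def mkuVotes {n m : ℕ} (S : Fin m → Finset (Fin n)) (k : ℕ) :
    List (List (MCand n)) :=
  ((List.finRange m).map (type1 S)) ++
    List.replicate (k - 1 + NVal S) (type2 n) ++
    List.replicate (NVal S) (type3 n)

/-! Since no buffer candidate is deleted, `b_1` tops every one of the `k - 1 + N` Type-2 votes.
The candidate `p` can top only the `N` Type-3 votes and those Type-1 votes for sets `S_i` that lie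
inside `D`, because a surviving member of `S_i` stands above `p` in the vote for `S_i`. So `p`
beating `b_1` forces at least `k` sets `S_i ⊆ D`. -/

section Plurality

variable {C : Type*} [DecidableEq C]

lemma topAfter_cons_of_notMem {D : Finset C} {a : C} (l : List C) (ha : a ∉ D) :
    topAfter D (a :: l) = some a := by
  simp [topAfter, ha]

lemma mem_of_topAfter_append_eq_some {D : Finset C} {l₁ l₂ : List C} {x c : C}
    (hx : x ∈ l₁) (hxD : x ∉ D) (h : topAfter D (l₁ ++ l₂) = some c) : c ∈ l₁ := by
  have hne : l₁.filter (fun c => decide (c ∉ D)) ≠ [] :=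
    List.ne_nil_of_mem (List.mem_filter.mpr ⟨hx, by simpa using hxD⟩)
  rw [topAfter, List.filter_append, List.head?_append_of_ne_nil _ hne] at h
  exact (List.mem_filter.mp (List.mem_of_mem_head? h)).1

lemma plScore_append (v₁ v₂ : List (List C)) (D : Finset C) (c : C) :
    plScore (v₁ ++ v₂) D c = plScore v₁ D c + plScore v₂ D c :=
  List.countP_append

lemma plScore_replicate (N : ℕ) (l : List C) (D : Finset C) (c : C) :
    plScore (List.replicate N l) D c = if topAfter D l = some c then N else 0 := by
  simp [plScore, List.countP_replicate]

lemma plScore_map_finRange {m : ℕ} (f : Fin m → List C) (D : Finset C) (c : C) :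
    plScore ((List.finRange m).map f) D c =
      (Finset.univ.filter (fun i => topAfter D (f i) = some c)).card := by
  rw [plScore, List.countP_map, Fin.univ_def, List.countP_eq_length_filter]
  simp [Finset.filter, Finset.card, Function.comp_def]

end Plurality

lemma topAfter_type2 {n : ℕ} {D : Finset (MCand n)} (h : mb 0 ∉ D) :
    topAfter D (type2 n) = some (mb 0) := by
  rw [type2, List.finRange_succ, List.map_cons, List.cons_append, List.cons_append]
  exact topAfter_cons_of_notMem _ h

lemma image_subset_of_topAfter_type1 {n m : ℕ} {S : Fin m → Finset (Fin n)} {i : Fin m}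
    {D : Finset (MCand n)} (h : topAfter D (type1 S i) = some mp) : (S i).image mu ⊆ D := by
  intro x hx
  by_contra hxD
  obtain ⟨u, hu, rfl⟩ := Finset.mem_image.mp hx
  rw [type1, List.append_assoc] at h
  obtain ⟨v, -, hv⟩ := List.mem_map.mp
    (mem_of_topAfter_append_eq_some (List.mem_map_of_mem (Finset.mem_toList.mpr hu)) hxD h)
  exact Sum.inl_ne_inr hv

lemma le_plScore_mkuVotes_mb_zero {n m : ℕ} (S : Fin m → Finset (Fin n)) (k : ℕ)
    {D : Finset (MCand n)} (h : mb 0 ∉ D) :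
    k - 1 + NVal S ≤ plScore (mkuVotes S k) D (mb 0) := by
  simp only [mkuVotes, plScore_append, plScore_replicate, topAfter_type2 h, if_true]
  omega

lemma plScore_mkuVotes_mp_le {n m : ℕ} (S : Fin m → Finset (Fin n)) (k : ℕ)
    {D : Finset (MCand n)} (h : mb 0 ∉ D) :
    plScore (mkuVotes S k) D mp ≤
      (Finset.univ.filter (fun i : Fin m => (S i).image mu ⊆ D)).card + NVal S := by
  have htype1 : plScore ((List.finRange m).map (type1 S)) D mp ≤
      (Finset.univ.filter (fun i : Fin m => (S i).image mu ⊆ D)).card := by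
    rw [plScore_map_finRange]
    exact Finset.card_le_card
      (Finset.monotone_filter_right _ fun _ _ => image_subset_of_topAfter_type1)
  have htype2 : topAfter D (type2 n) ≠ some mp := by
    simp [topAfter_type2 h, mb, mp]
  simp only [mkuVotes, plScore_append, plScore_replicate, htype2, if_false]
  split <;> omega

theorem stmt9_general {n m : ℕ} (S : Fin m → Finset (Fin n)) (k : ℕ) (D : Finset (MCand n))
    (hB : ∀ j : Fin (n + 1), mb j ∉ D)
    (hwin : ∀ c : MCand n, c ∉ D → c ≠ mp →
      plScore (mkuVotes S k) D c < plScore (mkuVotes S k) D mp) :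
    k ≤ (Finset.univ.filter (fun i : Fin m => (S i).image mu ⊆ D)).card := by
  have hb₁ := le_plScore_mkuVotes_mb_zero S k (hB 0)
  have hp := plScore_mkuVotes_mp_le S k (hB 0)
  have hbeat := hwin (mb 0) (hB 0) (by simp [mb, mp])
  omega

/-- In the plurality election constructed from an MkU instance `(U, S, k)` with
`k > 1`, if `D ⊆ C \ {p}` makes `p` the unique plurality winner and `D` contains
no buffer candidate, then at least `k` of the sets `S_i` satisfy `S_i ⊆ D`. -/
theorem stmt9 {n m : ℕ} (hn : 0 < n)
    (S : Fin m → Finset (Fin n)) (hSne : ∀ i, (S i).Nonempty)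
    (k : ℕ) (hk : 1 < k) (hkm : k ≤ m)
    (D : Finset (MCand n)) (hpD : mp ∉ D)
    (hB : ∀ j : Fin (n + 1), mb j ∉ D)
    (hwin : ∀ c : MCand n, c ∉ D → c ≠ mp →
      plScore (mkuVotes S k) D c < plScore (mkuVotes S k) D mp) :
    k ≤ (Finset.univ.filter (fun i : Fin m => (S i).image mu ⊆ D)).card :=
  stmt9_general S k D hB hwin
end

section
/- In the X3C-to-Condorcet-CCAV construction, if S' ⊆ S is an exact cover of B by three-sets (|S'| = k and the sets in S' are pairwise disjoint with union B), then adding the k unregistered voters corresponding to S' makes p the Condorcet winner: for every b ∈ B the pairwise margin of p over b is exactly 1, and the pairwise margin of p over c is exactly 1. -/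
/-- Candidates for the X3C construction: `B = Fin (3k)` together with the
special candidates `c` and `p`. -/
abbrev XCand (k : ℕ) := Fin (3 * k) ⊕ Bool

/-- The distinguished candidate `p`. -/
def xp {k : ℕ} : XCand k := Sum.inr true

/-- The candidate `c`. -/
def xc {k : ℕ} : XCand k := Sum.inr false

/-- The candidate `b`. -/
def xb {k : ℕ} (b : Fin (3 * k)) : XCand k := Sum.inl b

/-- A voter with preference list `l` (most preferred first) prefers `a` to `b`
when `a` occurs earlier in `l`.  The pairwise margin of `a` over `b` is the
number of voters preferring `a` to `b` minus the number preferring `b` to `a`. -/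
def margin {C : Type*} [DecidableEq C] (votes : List (List C)) (a b : C) : ℤ :=
  ((votes.countP (fun l => decide (l.idxOf a < l.idxOf b))) : ℤ) -
    ((votes.countP (fun l => decide (l.idxOf b < l.idxOf a))) : ℤ)

/-- Registered vote `B > p > c`. -/
def reg1 (k : ℕ) : List (XCand k) := ((List.finRange (3 * k)).map xb) ++ [xp, xc]

/-- Registered vote `p > c > B`. -/
def reg2 (k : ℕ) : List (XCand k) := [xp, xc] ++ ((List.finRange (3 * k)).map xb)

/-- Unregistered vote for `S_i`: `S_i > c > p > B \ S_i`. -/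
noncomputable def unreg {k n : ℕ} (S : Fin n → Finset (Fin (3 * k))) (i : Fin n) :
    List (XCand k) :=
  ((S i).toList.map xb) ++ [xc, xp] ++
    ((((Finset.univ : Finset (Fin (3 * k))) \ S i).toList).map xb)

/-- The election after adding the unregistered voters indexed by `T`:
`k - 1` votes `B > p > c`, two votes `p > c > B`, and for each `i ∈ T` the vote
`S_i > c > p > B \ S_i`. -/
noncomputable def xVotes {k n : ℕ} (S : Fin n → Finset (Fin (3 * k)))
    (T : Finset (Fin n)) : List (List (XCand k)) :=
  List.replicate (k - 1) (reg1 k) ++ List.replicate 2 (reg2 k) ++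
    (T.toList.map (unreg S))

/-! Every vote contributes `+1`, `-1` or `0` to a pairwise margin, and it ranks `a` above `b`
whenever some prefix of it contains `a` but not `b`. Against `c`, `p` wins the `k + 1`
registered votes and loses all `k` added ones. Against `b ∈ B`, `p` loses the `k - 1` votes
`B > p > c`, wins the two votes `p > c > B`, and among the added votes loses exactly the one
whose three-set contains `b` (exact cover) and wins the other `k - 1`. -/

section Margin

variable {C : Type*} [DecidableEq C]

theorem margin_swap (votes : List (List C)) (a b : C) :
    margin votes b a = -margin votes a b := by
  simp only [margin]; ring

theorem margin_cons (l : List C) (votes : List (List C)) (a b : C) :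
    margin (l :: votes) a b = margin [l] a b + margin votes a b := by
  simp only [margin, List.countP_cons, List.countP_nil]; push_cast; ring

theorem margin_eq_sum (votes : List (List C)) (a b : C) :
    margin votes a b = (votes.map fun l => margin [l] a b).sum := by
  induction votes with
  | nil => simp [margin]
  | cons l votes ih => rw [margin_cons, ih, List.map_cons, List.sum_cons]

theorem margin_singleton_of_idxOf_lt {l : List C} {a b : C} (h : l.idxOf a < l.idxOf b) :
    margin [l] a b = 1 := by
  simp [margin, h, h.not_gt]

theorem margin_singleton_append_of_mem_of_notMem {L R : List C} {a b : C}
    (ha : a ∈ L) (hb : b ∉ L) : margin [L ++ R] a b = 1 := by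
  apply margin_singleton_of_idxOf_lt
  rw [List.idxOf_append_of_mem ha, List.idxOf_append_of_notMem hb]
  exact (List.idxOf_lt_length_iff.2 ha).trans_le (Nat.le_add_right _ _)

theorem margin_singleton_append_of_notMem_of_mem {L R : List C} {a b : C}
    (ha : a ∉ L) (hb : b ∈ L) : margin [L ++ R] a b = -1 := by
  rw [margin_swap, margin_singleton_append_of_mem_of_notMem hb ha]

end Margin

section Cover

variable {ι α : Type*} [DecidableEq α]

theorem sum_ite_mem_neg_one_one_eq (T : Finset ι) (S : ι → Finset α) (b : α) :
    ∑ i ∈ T, (if b ∈ S i then (-1 : ℤ) else 1) = T.card - 2 * (T.filter (b ∈ S ·)).card := by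
  rw [Finset.sum_ite, Finset.sum_const, Finset.sum_const,
    ← Finset.card_filter_add_card_filter_not (fun i => b ∈ S i) (s := T)]
  simp only [Int.reduceNeg, Int.nsmul_eq_mul, mul_neg, mul_one, Nat.cast_add]
  ring

theorem card_filter_mem_eq_one_of_mem_biUnion {T : Finset ι} {S : ι → Finset α}
    (hdisj : ∀ i ∈ T, ∀ j ∈ T, i ≠ j → Disjoint (S i) (S j))
    (b : α) (hb : b ∈ T.biUnion S) : (T.filter (b ∈ S ·)).card = 1 := by
  obtain ⟨i, hiT, hbi⟩ := Finset.mem_biUnion.1 hb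
  rw [Finset.card_eq_one]
  refine ⟨i, Finset.eq_singleton_iff_unique_mem.2 ⟨Finset.mem_filter.2 ⟨hiT, hbi⟩, ?_⟩⟩
  rintro j hj
  obtain ⟨hjT, hbj⟩ := Finset.mem_filter.1 hj
  by_contra hji
  exact Finset.disjoint_left.1 (hdisj j hjT i hiT hji) hbj hbi

end Cover

section Construction

variable {k n : ℕ}

theorem xb_ne_xp (b : Fin (3 * k)) : xb b ≠ xp := by
  simp [xb, xp]

theorem xc_ne_xp : (xc : XCand k) ≠ xp := by
  simp [xc, xp]

theorem xp_notMem_map_xb (L : List (Fin (3 * k))) : (xp : XCand k) ∉ L.map xb := by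
  simp [xp, xb]

theorem margin_reg1_xp_xb (b : Fin (3 * k)) : margin [reg1 k] xp (xb b) = -1 :=
  margin_singleton_append_of_notMem_of_mem (xp_notMem_map_xb _) (by simp)

theorem margin_reg1_xp_xc : margin [reg1 k] xp xc = 1 := by
  rw [reg1, show [xp, xc] = [xp] ++ [xc] from rfl, ← List.append_assoc]
  exact margin_singleton_append_of_mem_of_notMem (by simp) (by simp [xp, xc, xb])

theorem margin_reg2_xp {d : XCand k} (hd : d ≠ xp) : margin [reg2 k] xp d = 1 :=
  margin_singleton_append_of_mem_of_notMem (L := [xp]) (by simp) (by simpa using hd)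

theorem margin_unreg_xp_xc (S : Fin n → Finset (Fin (3 * k))) (i : Fin n) :
    margin [unreg S i] xp xc = -1 := by
  have h := margin_singleton_append_of_notMem_of_mem (a := xp) (b := xc)
    (L := (S i).toList.map xb ++ [xc]) (R := xp :: (Finset.univ \ S i).toList.map xb)
    (by simp [xp, xc, xb]) (by simp)
  simpa [unreg] using h

theorem margin_unreg_xp_xb (S : Fin n → Finset (Fin (3 * k))) (i : Fin n)
    (b : Fin (3 * k)) : margin [unreg S i] xp (xb b) = if b ∈ S i then -1 else 1 := by
  split_ifs with hb
  · rw [unreg, List.append_assoc]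
    exact margin_singleton_append_of_notMem_of_mem (xp_notMem_map_xb _) (by simpa [xb])
  · exact margin_singleton_append_of_mem_of_notMem (by simp) (by simpa [xb, xp, xc])

theorem margin_xVotes (S : Fin n → Finset (Fin (3 * k))) (T : Finset (Fin n))
    (a d : XCand k) :
    margin (xVotes S T) a d = (k - 1 : ℕ) * margin [reg1 k] a d + 2 * margin [reg2 k] a d
      + ∑ i ∈ T, margin [unreg S i] a d := by
  rw [margin_eq_sum, xVotes, List.map_append, List.map_append, List.sum_append, List.sum_append,
    List.map_replicate, List.map_replicate, List.sum_replicate, List.sum_replicate,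
    List.map_map, Finset.sum_map_toList]
  simp

end Construction

theorem stmt14_general {k n : ℕ} (hk : 3 ≤ k)
    (S : Fin n → Finset (Fin (3 * k)))
    (T : Finset (Fin n)) (hT : T.card = k)
    (hdisj : ∀ i ∈ T, ∀ j ∈ T, i ≠ j → Disjoint (S i) (S j))
    (hcover : T.biUnion S = Finset.univ) :
    (∀ b : Fin (3 * k), margin (xVotes S T) xp (xb b) = 1) ∧
    margin (xVotes S T) xp xc = 1 := by
  have hk1 : ((k - 1 : ℕ) : ℤ) = k - 1 := by omega
  refine ⟨fun b => ?_, ?_⟩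
  · have hb := card_filter_mem_eq_one_of_mem_biUnion hdisj b (hcover ▸ Finset.mem_univ b)
    simp only [margin_xVotes, margin_reg1_xp_xb, margin_reg2_xp (xb_ne_xp b),
      margin_unreg_xp_xb, sum_ite_mem_neg_one_one_eq, hb, hT, hk1]
    ring
  · simp only [margin_xVotes, margin_reg1_xp_xc, margin_reg2_xp xc_ne_xp,
      margin_unreg_xp_xc, Finset.sum_const, hT, hk1]
    ring

/-- In the X3C-to-Condorcet-CCAV construction, if `{S_i : i ∈ T}` is an exact
cover of `B` by three-sets (`|T| = k`, pairwise disjoint sets with union `B`),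
then adding the corresponding `k` unregistered voters makes `p` the Condorcet
winner: `p`'s pairwise margin over each `b ∈ B` is exactly `1`, and `p`'s
pairwise margin over `c` is exactly `1`. -/
theorem stmt14 {k n : ℕ} (hk : 3 ≤ k)
    (S : Fin n → Finset (Fin (3 * k))) (hS3 : ∀ i, (S i).card = 3)
    (T : Finset (Fin n)) (hT : T.card = k)
    (hdisj : ∀ i ∈ T, ∀ j ∈ T, i ≠ j → Disjoint (S i) (S j))
    (hcover : T.biUnion S = Finset.univ) :
    (∀ b : Fin (3 * k), margin (xVotes S T) xp (xb b) = 1) ∧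
    margin (xVotes S T) xp xc = 1 :=
  stmt14_general hk S T hT hdisj hcover
end

section
/- In the Hitting-Set-to-Condorcet-CCUDV construction, if B' ⊆ B is a hitting set with |B'| = k, then deleting the m − k voters {y_j : b_j ∉ B'} makes p the Condorcet winner: p's pairwise margin over each candidate d_i and over e equals 1, and p's pairwise margin over each S_i is at least 1. -/
/-- Candidates for the Hitting-Set-to-Condorcet-CCUDV construction: `p` (coded
as `none`), the `n` set-candidates `S_1,…,S_n`, the `k+1` candidates
`d_1,…,d_{k+1}`, and `e`. -/
abbrev KCand (n k : ℕ) := Option (Fin n ⊕ (Fin (k + 1) ⊕ Unit))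

/-- The distinguished candidate `p`. -/
def kp {n k : ℕ} : KCand n k := none

/-- The set-candidate `S_i`. -/
def ks {n k : ℕ} (i : Fin n) : KCand n k := some (Sum.inl i)

/-- The candidate `d_i`. -/
def kd {n k : ℕ} (i : Fin (k + 1)) : KCand n k := some (Sum.inr (Sum.inl i))

/-- The candidate `e`. -/
def ke {n k : ℕ} : KCand n k := some (Sum.inr (Sum.inr ()))

/-- The voter `x_i` (with `x_1` corresponding to `i = 0`):
`x_1` has order `S_1,…,S_n > d_2,…,d_{k+1} > p > d_1 > e`; for `i ≠ 0`, `x_i`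
has order `D \ {d_i} > p > d_i > e > S_1,…,S_n`. -/
def xvote (n k : ℕ) (i : Fin (k + 1)) : List (KCand n k) :=
  if i = 0 then
    ((List.finRange n).map ks) ++
      (((List.finRange (k + 1)).filter (fun t => decide (t ≠ 0))).map kd) ++
      [kp, kd 0, ke]
  else
    (((List.finRange (k + 1)).filter (fun t => decide (t ≠ i))).map kd) ++
      [kp, kd i, ke] ++ ((List.finRange n).map ks)

/-- The voter `y_j`: order
`(S-candidates not containing b_j) > e > p > d_1,…,d_{k+1} >
(S-candidates containing b_j)`. -/
def yvote (n k : ℕ) {m : ℕ} (S : Fin n → Finset (Fin m)) (j : Fin m) :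
    List (KCand n k) :=
  (((List.finRange n).filter (fun i => decide (j ∉ S i))).map ks) ++
    [ke, kp] ++ ((List.finRange (k + 1)).map kd) ++
    (((List.finRange n).filter (fun i => decide (j ∈ S i))).map ks)

/-!
Every ballot ranks `p`, so the margin of `p` over any other candidate `c` is
`2 · #{ballots ranking p above c} - (2k + 1)`. The candidate `p` is above `d_t` on `x_t` and on
all `k` kept ballots `y_j`, and above `e` on all `k + 1` ballots `x_i`: both margins are `1`.
It is above `S_i` on the `k` ballots `x_2, …, x_{k+1}` and on `y_j` exactly when `b_j ∈ S_i`;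
since `B'` is a hitting set, there is at least one such `j ∈ B'`, so that margin is at least `1`.
-/

namespace List

variable {C : Type*} [DecidableEq C] {l l₁ l₂ : List C} {a b c : C}

def Prefers (l : List C) (a b : C) : Prop := l.idxOf a < l.idxOf b

instance : Decidable (l.Prefers a b) := Nat.decLt _ _

theorem prefers_swap_iff_not_prefers (ha : a ∈ l) (hab : a ≠ b) :
    l.Prefers b a ↔ ¬ l.Prefers a b := by
  have : l.idxOf a ≠ l.idxOf b := fun h => hab ((idxOf_inj ha).1 h)
  unfold Prefers
  omega

theorem not_prefers_of_notMem (ha : a ∉ l) : ¬ l.Prefers a b := by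
  simpa only [Prefers, idxOf_eq_length ha, not_lt] using idxOf_le_length

theorem prefers_append_of_notMem_left (ha : a ∉ l₁) :
    (l₁ ++ l₂).Prefers a b ↔ b ∉ l₁ ∧ l₂.Prefers a b := by
  by_cases hb : b ∈ l₁
  · have := idxOf_lt_length_of_mem hb
    simp only [Prefers, idxOf_append, ha, hb, if_true, if_false, not_true, false_and, iff_false]
    omega
  · simp only [Prefers, idxOf_append, ha, hb, if_false, not_false_eq_true, true_and]
    omega

theorem prefers_cons : (c :: l).Prefers a b ↔ c = a ∧ c ≠ b ∨ c ≠ a ∧ c ≠ b ∧ l.Prefers a b := by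
  by_cases hca : c = a
  · subst hca
    by_cases hcb : c = b
    · subst hcb
      simp [Prefers]
    · simp [Prefers, idxOf_cons_ne _ hcb, hcb]
  · by_cases hcb : c = b
    · subst hcb
      simp [Prefers, idxOf_cons_ne _ hca, hca]
    · simp [Prefers, idxOf_cons_ne _ hca, idxOf_cons_ne _ hcb, hca, hcb]

theorem countP_finRange_eq {n : ℕ} (t : Fin n) : (finRange n).countP (· = t) = 1 :=
  count_finRange t

theorem countP_finRange_ne {n : ℕ} (t : Fin n) : (finRange n).countP (· ≠ t) = n - 1 := by
  have := length_eq_countP_add_countP (fun i => decide (i = t)) (l := finRange n)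
  simp only [length_finRange, decide_eq_true_eq, decide_not, countP_finRange_eq] at this
  simp only [decide_not]
  omega

end List

theorem Finset.countP_toList {α : Type*} (s : Finset α) (p : α → Prop) [DecidablePred p] :
    s.toList.countP (p ·) = (s.filter p).card := by
  rw [← Multiset.coe_countP, Finset.coe_toList, Multiset.countP_eq_card_filter]
  rfl

section Margin

variable {C : Type*} [DecidableEq C] {votes : List (List C)} {a b : C}

theorem margin_eq_countP_prefers (votes : List (List C)) (a b : C) :
    margin votes a b =
      (votes.countP (·.Prefers a b) : ℤ) - (votes.countP (·.Prefers b a) : ℤ) := rfl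

-- When `a` is on every ballot, each voter ranks exactly one of `a`, `b` above the other.
theorem margin_eq_two_mul_countP_sub_length (ha : ∀ l ∈ votes, a ∈ l) (hab : a ≠ b) :
    margin votes a b = 2 * (votes.countP (·.Prefers a b) : ℤ) - votes.length := by
  have hswap : votes.countP (·.Prefers b a) = votes.countP (fun l => ¬ decide (l.Prefers a b)) :=
    List.countP_congr fun l hl => by simp [List.prefers_swap_iff_not_prefers (ha l hl) hab]
  rw [margin_eq_countP_prefers, hswap, List.length_eq_countP_add_countP (·.Prefers a b)]
  push_cast
  ring

end Margin

section Ballots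

variable {n k m : ℕ}

attribute [local simp] kp ks kd ke List.prefers_append_of_notMem_left List.prefers_cons
  List.not_prefers_of_notMem

theorem kp_mem_xvote (i : Fin (k + 1)) : kp ∈ xvote n k i := by
  unfold xvote
  split_ifs <;> simp

theorem kp_mem_yvote (S : Fin n → Finset (Fin m)) (j : Fin m) : kp ∈ yvote n k S j := by
  simp [yvote]

theorem xvote_prefers_kp_kd_iff (i t : Fin (k + 1)) :
    (xvote n k i).Prefers kp (kd t) ↔ i = t := by
  unfold xvote
  split_ifs with hi <;> simp [hi] <;> exact eq_comm

theorem xvote_prefers_kp_ke (i : Fin (k + 1)) : (xvote n k i).Prefers kp ke := by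
  unfold xvote
  split_ifs <;> simp

theorem xvote_prefers_kp_ks_iff (i : Fin (k + 1)) (s : Fin n) :
    (xvote n k i).Prefers kp (ks s) ↔ i ≠ 0 := by
  unfold xvote
  split_ifs with hi <;> simp [hi]

theorem yvote_prefers_kp_kd (S : Fin n → Finset (Fin m)) (j : Fin m) (t : Fin (k + 1)) :
    (yvote n k S j).Prefers kp (kd t) := by
  simp [yvote]

theorem not_yvote_prefers_kp_ke (S : Fin n → Finset (Fin m)) (j : Fin m) :
    ¬ (yvote n k S j).Prefers kp ke := by
  simp [yvote]

theorem yvote_prefers_kp_ks_iff (S : Fin n → Finset (Fin m)) (j : Fin m) (s : Fin n) :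
    (yvote n k S j).Prefers kp (ks s) ↔ j ∈ S s := by
  simp [yvote]

end Ballots

theorem stmt16_general {n m : ℕ} (k : ℕ)
    (S : Fin n → Finset (Fin m))
    (B' : Finset (Fin m)) (hhit : ∀ i, ∃ j ∈ B', j ∈ S i) (hcard : B'.card = k)
    (votes : List (List (KCand n k)))
    (hv : votes = ((List.finRange (k + 1)).map (xvote n k)) ++
      (B'.toList.map (yvote n k S))) :
    (∀ i : Fin (k + 1), margin votes kp (kd i) = 1) ∧
    margin votes kp ke = 1 ∧
    (∀ i : Fin n, 1 ≤ margin votes kp (ks i)) := by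
  have hp : ∀ l ∈ votes, kp ∈ l := by
    simp only [hv, List.mem_append, List.mem_map]
    rintro l (⟨i, -, rfl⟩ | ⟨j, -, rfl⟩)
    exacts [kp_mem_xvote i, kp_mem_yvote S j]
  have hlen : (votes.length : ℤ) = 2 * k + 1 := by
    simp only [hv, List.length_append, List.length_map, List.length_finRange,
      Finset.length_toList, hcard]
    push_cast
    ring
  have hcount : ∀ c, votes.countP (·.Prefers kp c) =
      (List.finRange (k + 1)).countP (fun i => (xvote n k i).Prefers kp c) +
        B'.toList.countP (fun j => (yvote n k S j).Prefers kp c) := by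
    simp [hv, List.countP_append, List.countP_map, Function.comp_def]
  refine ⟨fun t => ?_, ?_, fun s => ?_⟩
  · rw [margin_eq_two_mul_countP_sub_length hp (by simp [kp, kd]), hlen, hcount]
    simp only [xvote_prefers_kp_kd_iff, yvote_prefers_kp_kd, List.countP_finRange_eq,
      decide_true, List.countP_true, Finset.length_toList, hcard]
    push_cast
    ring
  · rw [margin_eq_two_mul_countP_sub_length hp (by simp [kp, ke]), hlen, hcount]
    simp only [xvote_prefers_kp_ke, not_yvote_prefers_kp_ke, decide_true, decide_false,
      List.countP_true, List.countP_false, Function.const_apply, List.length_finRange]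
    push_cast
    ring
  · obtain ⟨j, hjB, hjS⟩ := hhit s
    have hpos : (1 : ℤ) ≤ (B'.filter (· ∈ S s)).card := by
      exact_mod_cast Finset.card_pos.mpr ⟨j, Finset.mem_filter.mpr ⟨hjB, hjS⟩⟩
    rw [margin_eq_two_mul_countP_sub_length hp (by simp [kp, ks]), hlen, hcount]
    simp only [xvote_prefers_kp_ks_iff, yvote_prefers_kp_ks_iff, List.countP_finRange_ne,
      Nat.add_sub_cancel, Finset.countP_toList]
    push_cast
    linarith

/-- In the Hitting-Set-to-Condorcet-CCUDV construction, if `B'` is a hitting set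
with `|B'| = k`, then deleting the `m - k` voters `{y_j : b_j ∉ B'}` (keeping
all `x_i` and the voters `y_j` with `j ∈ B'`) makes `p` the Condorcet winner:
`p`'s pairwise margin over each `d_i` and over `e` equals `1`, and `p`'s
pairwise margin over each set-candidate `S_i` is at least `1`. -/
theorem stmt16 {n m : ℕ} (k : ℕ) (hk : 0 < k) (hkm : k ≤ m)
    (S : Fin n → Finset (Fin m))
    (B' : Finset (Fin m)) (hhit : ∀ i, ∃ j ∈ B', j ∈ S i) (hcard : B'.card = k)
    (votes : List (List (KCand n k)))
    (hv : votes = ((List.finRange (k + 1)).map (xvote n k)) ++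
      (B'.toList.map (yvote n k S))) :
    (∀ i : Fin (k + 1), margin votes kp (kd i) = 1) ∧
    margin votes kp ke = 1 ∧
    (∀ i : Fin n, 1 ≤ margin votes kp (ks i)) :=
  stmt16_general k S B' hhit hcard votes hv
end
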